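/- Let V be a finite-dimensional complex vector space, let Q be a quadratic form on V, and let n be the rank of Q. Then every finite-dimensional simple module over the Clifford algebra Cl(Q) has dimension 2^{⌊n/2⌋} over ℂ. -/

import Mathlib

/-!
For `u` in the radical of `Q`, `ι u` anticommutes with every generator, so the kernel of `ι u • ·`
is a submodule; it is nonzero because `(ι u)² = 0`, hence everything by simplicity. The action
therefore factors through the Clifford algebra of the nondegenerate form induced on `V ⧸ radical`,
which over `ℂ` is a sum of `n` squares.

For a sum of `n + 2` squares let `a`, `b` be the images of the last two basis vectors. Then `b`
swaps the `±1`-eigenspaces of the involution `a`, while `u ↦ i ρ(u) b` commutes with `a`, squares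
to the form and anticommutes with `b`; it makes the `+1`-eigenspace an irreducible representation
of the sum of the first `n` squares, of half the dimension. The cases `n ≤ 1` have dimension one.
-/

open QuadraticMap QuadraticForm Module

namespace QuadraticMap
variable {R V : Type*} [CommRing R] [AddCommGroup V] [Module R V] (Q : QuadraticForm R V)

abbrev radicalQuotient : QuadraticForm R (V ⧸ Q.radical) := Q.lift Q.radical le_rfl

def radicalMkQ : Q →qᵢ Q.radicalQuotient where
  toLinearMap := Q.radical.mkQ
  map_app' _ := rfl

theorem radical_radicalQuotient : Q.radicalQuotient.radical = ⊥ := by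
  ext x
  induction x using Submodule.Quotient.induction_on with | H x => ?_
  simp only [mem_radical_iff', Submodule.mem_bot, Submodule.Quotient.mk_eq_zero]
  rw [Submodule.Quotient.forall]
  rfl

theorem separatingLeft_associated_radicalQuotient [Invertible (2 : R)] :
    (associated Q.radicalQuotient).SeparatingLeft := by
  rw [LinearMap.separatingLeft_iff_ker_eq_bot, ← radical_eq_ker_associated,
    radical_radicalQuotient]

end QuadraticMap

namespace QuadraticForm

abbrev sumSquares (n : ℕ) : QuadraticForm ℂ (Fin n → ℂ) := weightedSumSquares ℂ (1 : Fin n → ℂ)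

@[simp]
theorem sumSquares_apply {n : ℕ} (v : Fin n → ℂ) : sumSquares n v = ∑ i, v i * v i := by
  simp

def sumSquaresAddEquivProd (m n : ℕ) :
    (sumSquares (m + n)).IsometryEquiv ((sumSquares m).prod (sumSquares n)) where
  toLinearEquiv := (LinearEquiv.funCongrLeft ℂ ℂ finSumFinEquiv).trans
    (LinearEquiv.sumArrowLequivProdArrow _ _ ℂ ℂ)
  map_app' v := by simp [Fin.sum_univ_add]

end QuadraticForm

namespace Module.End

theorem apply_mem_eigenspace_neg_of_anticomm {R M : Type*} [CommRing R] [AddCommGroup M]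
    [Module R M] {a b : Module.End R M} (hab : a * b = -(b * a)) {μ : R} {m : M}
    (hm : m ∈ a.eigenspace μ) : b m ∈ a.eigenspace (-μ) := by
  rw [mem_eigenspace_iff] at hm ⊢
  rw [← mul_apply, hab]
  simp [hm]

variable {K M : Type*} [Field K] [NeZero (2 : K)] [AddCommGroup M] [Module K M]
  {a b : Module.End K M}

theorem disjoint_eigenspace_one_neg_one (a : Module.End K M) :
    Disjoint (a.eigenspace 1) (a.eigenspace (-1)) :=
  a.disjoint_genEigenspace (by
    rw [ne_eq, ← sub_eq_zero, sub_neg_eq_add, one_add_one_eq_two]; exact two_ne_zero) 1 1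

theorem isCompl_eigenspace_one_neg_one (ha : a * a = 1) :
    IsCompl (a.eigenspace 1) (a.eigenspace (-1)) := by
  have ha' : ∀ m, a (a m) = m := fun m => congr($ha m)
  refine ⟨a.disjoint_eigenspace_one_neg_one, codisjoint_iff.mpr (eq_top_iff.mpr fun m _ => ?_)⟩
  refine Submodule.mem_sup.mpr ⟨(2⁻¹ : K) • (m + a m), ?_, (2⁻¹ : K) • (m - a m), ?_, ?_⟩
  · simp [ha', add_comm]
  · simp [ha', smul_sub, neg_add_eq_sub]
  · rw [← smul_add, add_add_sub_cancel, ← two_smul K, smul_smul, inv_mul_cancel₀ two_ne_zero,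
      one_smul]

theorem finrank_eq_two_mul_finrank_eigenspace_one [FiniteDimensional K M]
    (ha : a * a = 1) (hb : b * b = 1) (hab : a * b = -(b * a)) :
    finrank K M = 2 * finrank K (a.eigenspace 1) := by
  have hb' : ∀ m, b (b m) = m := fun m => congr($hb m)
  let swap : a.eigenspace 1 ≃ₗ[K] a.eigenspace (-1) :=
    .ofLinearMap (b.restrict fun _ => apply_mem_eigenspace_neg_of_anticomm hab)
      (b.restrict fun _ hm => by simpa using apply_mem_eigenspace_neg_of_anticomm hab hm)
      (by ext; simp [hb']) (by ext; simp [hb'])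
  rw [← Submodule.finrank_add_eq_of_isCompl (isCompl_eigenspace_one_neg_one ha),
    ← swap.finrank_eq, two_mul]

theorem eq_bot_or_eq_eigenspace_one {ι : Type*} {θ : ι → Module.End K M}
    (hab : a * b = -(b * a)) (hb : b * b = 1) (hθb : ∀ i, θ i * b = -(b * θ i))
    (hirr : ∀ N : Submodule K M, (∀ m ∈ N, a m ∈ N) → (∀ m ∈ N, b m ∈ N) →
      (∀ i, ∀ m ∈ N, θ i m ∈ N) → N = ⊥ ∨ N = ⊤)
    {N : Submodule K M} (hN : N ≤ a.eigenspace 1) (hθN : ∀ i, ∀ m ∈ N, θ i m ∈ N) :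
    N = ⊥ ∨ N = a.eigenspace 1 := by
  have hb' : ∀ m, b (b m) = m := fun m => congr($hb m)
  have hθb' : ∀ i m, θ i (b m) = -b (θ i m) := fun i m => congr($(hθb i) m)
  have hab' : ∀ m, a (b m) = -b (a m) := fun m => congr($hab m)
  have haN : ∀ m ∈ N, a m = m := fun m hm => by simpa using mem_eigenspace_iff.mp (hN hm)
  -- `N ⊔ b N` is invariant, and it meets the `+1`-eigenspace of `a` exactly in `N`.
  set N' := N ⊔ N.map b
  have mem_left : ∀ m ∈ N, m ∈ N' := fun m hm => Submodule.mem_sup_left hm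
  have mem_right : ∀ m ∈ N, b m ∈ N' := fun m hm =>
    Submodule.mem_sup_right (Submodule.mem_map_of_mem hm)
  have invariant : ∀ f : Module.End K M, (∀ m ∈ N, f m ∈ N') → (∀ m ∈ N, f (b m) ∈ N') →
      ∀ m ∈ N', f m ∈ N' := by
    intro f h₁ h₂ m hm
    obtain ⟨x, hx, _, ⟨y, hy, rfl⟩, rfl⟩ := Submodule.mem_sup.mp hm
    rw [map_add]
    exact N'.add_mem (h₁ x hx) (h₂ y hy)
  rcases hirr N'
    (invariant a (fun m hm => by rw [haN m hm]; exact mem_left m hm)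
      (fun m hm => by rw [hab', haN m hm]; exact N'.neg_mem (mem_right m hm)))
    (invariant b mem_right (fun m hm => (hb' m).symm ▸ mem_left m hm))
    (fun i => invariant (θ i) (fun m hm => mem_left _ (hθN i m hm))
      (fun m hm => by rw [hθb']; exact N'.neg_mem (mem_right _ (hθN i m hm)))) with h | h
  · exact .inl (eq_bot_iff.mpr (h ▸ le_sup_left))
  · refine .inr (le_antisymm hN fun m hm => ?_)
    obtain ⟨x, hx, _, ⟨y, hy, rfl⟩, hxy⟩ :=
      Submodule.mem_sup.mp (h ▸ Submodule.mem_top : m ∈ N')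
    have hby : b y = 0 := by
      refine Submodule.disjoint_def.mp a.disjoint_eigenspace_one_neg_one _ ?_
        (by simpa using apply_mem_eigenspace_neg_of_anticomm hab (hN hy))
      rw [eq_sub_of_add_eq' hxy]
      exact Submodule.sub_mem _ hm (hN hx)
    rwa [← hxy, hby, add_zero]

end Module.End

namespace CliffordAlgebra

variable {R V : Type*} [CommRing R] [AddCommGroup V] [Module R V] {Q : QuadraticForm R V}
  {M : Type*} [AddCommGroup M]

def IsIrreducible [Module R M] (ρ : CliffordAlgebra Q →ₐ[R] Module.End R M) : Prop :=
  Nontrivial M ∧ ∀ N : Submodule R M, (∀ v, ∀ m ∈ N, ρ (ι Q v) m ∈ N) → N = ⊥ ∨ N = ⊤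

theorem comp_ι_mul_comp_ι_of_isOrtho {A : Type*} [Ring A] [Algebra R A]
    (ρ : CliffordAlgebra Q →ₐ[R] A) {x y : V} (h : Q.IsOrtho x y) :
    ρ (ι Q x) * ρ (ι Q y) = -(ρ (ι Q y) * ρ (ι Q x)) := by
  rw [← map_mul, ι_mul_ι_comm_of_isOrtho h, map_neg, map_mul]

theorem apply_mem_of_forall_ι_apply_mem [Module R M]
    (ρ : CliffordAlgebra Q →ₐ[R] Module.End R M)
    {N : Submodule R M} (hN : ∀ v, ∀ m ∈ N, ρ (ι Q v) m ∈ N) (x : CliffordAlgebra Q) :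
    ∀ m ∈ N, ρ x m ∈ N := by
  induction x using CliffordAlgebra.induction with
  | algebraMap r => simpa [Module.algebraMap_end_apply] using fun m hm => N.smul_mem r hm
  | ι v => exact hN v
  | mul x y hx hy => exact fun m hm => by rw [map_mul]; exact hx _ (hy m hm)
  | add x y hx hy => exact fun m hm => by rw [map_add]; exact N.add_mem (hx m hm) (hy m hm)

theorem isIrreducible_comp_map_iff [Module R M] {V' : Type*} [AddCommGroup V'] [Module R V']
    {Q' : QuadraticForm R V'} (ρ : CliffordAlgebra Q' →ₐ[R] Module.End R M) (f : Q →qᵢ Q')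
    (hf : Function.Surjective f) : IsIrreducible (ρ.comp (map f)) ↔ IsIrreducible ρ := by
  simp only [IsIrreducible, AlgHom.comp_apply, map_apply_ι, hf.forall]

theorem isIrreducible_lsmul [Module R M] [Module (CliffordAlgebra Q) M]
    [IsScalarTower R (CliffordAlgebra Q) M] [IsSimpleModule (CliffordAlgebra Q) M] :
    IsIrreducible (Algebra.lsmul R R M : CliffordAlgebra Q →ₐ[R] _) := by
  refine ⟨IsSimpleModule.nontrivial (CliffordAlgebra Q) M, fun N hN => ?_⟩
  let N' : Submodule (CliffordAlgebra Q) M :=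
    { N with smul_mem' := fun x m hm => apply_mem_of_forall_ι_apply_mem _ hN x m hm }
  have hN' : N'.restrictScalars R = N := rfl
  rcases eq_bot_or_eq_top N' with h | h
  · exact .inl (by rw [← hN', h, Submodule.restrictScalars_bot])
  · exact .inr (by rw [← hN', h, Submodule.restrictScalars_top])

section Radical

theorem mul_ι_of_mem_radical {u : V} (hu : u ∈ Q.radical) (x : CliffordAlgebra Q) :
    x * ι Q u = ι Q u * involute x := by
  have hortho : ∀ v, Q.IsOrtho v u := fun v => by
    rw [QuadraticMap.isOrtho_def, add_comm, (mem_radical_iff'.mp hu).2,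
      (mem_radical_iff'.mp hu).1, add_zero]
  induction x using CliffordAlgebra.induction with
  | algebraMap r => rw [AlgHom.commutes, Algebra.commutes]
  | ι v => rw [involute_ι, mul_neg, ι_mul_ι_comm_of_isOrtho (hortho v)]
  | mul x y hx hy => rw [map_mul, mul_assoc, hy, ← mul_assoc, hx, mul_assoc]
  | add x y hx hy => rw [add_mul, hx, hy, map_add, mul_add]

theorem ι_smul_eq_zero_of_mem_radical [Module (CliffordAlgebra Q) M]
    [IsSimpleModule (CliffordAlgebra Q) M] {u : V} (hu : u ∈ Q.radical) (m : M) :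
    ι Q u • m = 0 := by
  let K : Submodule (CliffordAlgebra Q) M :=
    { carrier := {m | ι Q u • m = 0}
      add_mem' := fun hm hm' => by simp_all
      zero_mem' := smul_zero _
      smul_mem' := fun x m (hm : ι Q u • m = 0) => by
        rw [Set.mem_ofPred_eq, smul_smul, ← involute_involute x, ← mul_ι_of_mem_radical hu,
          mul_smul, hm, smul_zero] }
  have hsq : ∀ m : M, ι Q u • m ∈ K := fun m => by
    simp [K, smul_smul, ι_sq_scalar, (mem_radical_iff'.mp hu).1]
  rcases eq_bot_or_eq_top K with h | h
  · simpa [h] using hsq m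
  · exact (h ▸ Submodule.mem_top : m ∈ K)

variable (Q M) [Module R M] [Module (CliffordAlgebra Q) M] [IsScalarTower R (CliffordAlgebra Q) M]
  [IsSimpleModule (CliffordAlgebra Q) M]

def radicalQuotientRep : CliffordAlgebra Q.radicalQuotient →ₐ[R] Module.End R M :=
  lift _ ⟨Q.radical.liftQ ((Algebra.lsmul R R M).toLinearMap ∘ₗ ι Q) fun u hu =>
      LinearMap.ext (ι_smul_eq_zero_of_mem_radical hu),
    fun x => by
      induction x using Submodule.Quotient.induction_on with | H x => ?_
      exact comp_ι_sq_scalar (Algebra.lsmul R R M) x⟩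

theorem radicalQuotientRep_comp_map :
    (radicalQuotientRep Q M).comp (map Q.radicalMkQ) = Algebra.lsmul R R M := by
  refine hom_ext (LinearMap.ext fun v => ?_)
  simp only [LinearMap.comp_apply, AlgHom.toLinearMap_apply, AlgHom.comp_apply, map_apply_ι]
  exact lift_ι_apply _ _ _

theorem isIrreducible_radicalQuotientRep : IsIrreducible (radicalQuotientRep Q M) := by
  rw [← isIrreducible_comp_map_iff _ Q.radicalMkQ Q.radical.mkQ_surjective,
    radicalQuotientRep_comp_map]
  exact isIrreducible_lsmul

end Radical

section LiftRestrict
variable [Module R M] (f : V →ₗ[R] Module.End R M) (hf : ∀ v, f v * f v = algebraMap R _ (Q v))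
  (P : Submodule R M) (hP : ∀ v, ∀ m ∈ P, f v m ∈ P)

def liftRestrict : CliffordAlgebra Q →ₐ[R] Module.End R P :=
  lift Q ⟨{ toFun v := (f v).restrict (hP v)
            map_add' _ _ := by ext; simp
            map_smul' _ _ := by ext; simp },
    fun v => by ext m; simpa using congr($(hf v) m)⟩

@[simp]
theorem liftRestrict_ι_apply (v : V) (m : P) :
    (liftRestrict f hf P hP (ι Q v) m : M) = f v m := by
  simp [liftRestrict]

end LiftRestrict

section Step
variable {U M : Type*} [AddCommGroup U] [Module ℂ U] [AddCommGroup M] [Module ℂ M]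
  {Q : QuadraticForm ℂ U} (ρ : CliffordAlgebra (Q.prod (sumSquares 2)) →ₐ[ℂ] Module.End ℂ M)

abbrev gen₀ : Module.End ℂ M := ρ (ι _ (0, Pi.single 0 1))

abbrev gen₁ : Module.End ℂ M := ρ (ι _ (0, Pi.single 1 1))

def twist : U →ₗ[ℂ] Module.End ℂ M :=
  Complex.I • (LinearMap.mulRight ℂ (gen₁ ρ) ∘ₗ ρ.toLinearMap ∘ₗ ι _ ∘ₗ LinearMap.inl ℂ U _)

theorem twist_apply (u : U) : twist ρ u = Complex.I • (ρ (ι _ (u, 0)) * gen₁ ρ) := rfl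

theorem gen₀_mul_self : gen₀ ρ * gen₀ ρ = 1 := by
  rw [comp_ι_sq_scalar]; simp

theorem gen₁_mul_self : gen₁ ρ * gen₁ ρ = 1 := by
  rw [comp_ι_sq_scalar]; simp

theorem gen₀_mul_gen₁ : gen₀ ρ * gen₁ ρ = -(gen₁ ρ * gen₀ ρ) :=
  comp_ι_mul_comp_ι_of_isOrtho ρ <| .prod (.zero_left _) <| by
    simp [QuadraticMap.isOrtho_def, Fin.sum_univ_two]

theorem inl_mul_gen₀ (u : U) : ρ (ι _ (u, 0)) * gen₀ ρ = -(gen₀ ρ * ρ (ι _ (u, 0))) :=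
  comp_ι_mul_comp_ι_of_isOrtho ρ (.inl_inr _ _)

theorem gen₁_mul_inl (u : U) : gen₁ ρ * ρ (ι _ (u, 0)) = -(ρ (ι _ (u, 0)) * gen₁ ρ) :=
  comp_ι_mul_comp_ι_of_isOrtho ρ (.inr_inl _ _)

theorem twist_mul_self (u : U) : twist ρ u * twist ρ u = algebraMap ℂ _ (Q u) := by
  set C := ρ (ι _ (u, 0))
  have hCC : C * C = algebraMap ℂ _ (Q u) := by rw [comp_ι_sq_scalar]; simp
  rw [twist_apply, smul_mul_smul_comm, Complex.I_mul_I, neg_one_smul, neg_eq_iff_eq_neg, ← hCC]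
  calc C * gen₁ ρ * (C * gen₁ ρ) = C * (gen₁ ρ * C) * gen₁ ρ := by noncomm_ring
    _ = -(C * C * (gen₁ ρ * gen₁ ρ)) := by rw [gen₁_mul_inl]; noncomm_ring
    _ = -(C * C) := by rw [gen₁_mul_self, mul_one]

theorem gen₀_mul_twist (u : U) : gen₀ ρ * twist ρ u = twist ρ u * gen₀ ρ := by
  rw [twist_apply, mul_smul_comm, smul_mul_assoc]
  congr 1
  calc gen₀ ρ * (ρ (ι _ (u, 0)) * gen₁ ρ) = -(ρ (ι _ (u, 0)) * gen₀ ρ) * gen₁ ρ := by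
        rw [inl_mul_gen₀, neg_neg, mul_assoc]
    _ = ρ (ι _ (u, 0)) * gen₁ ρ * gen₀ ρ := by
        rw [neg_mul, mul_assoc, gen₀_mul_gen₁]; noncomm_ring

theorem twist_mul_gen₁ (u : U) : twist ρ u * gen₁ ρ = -(gen₁ ρ * twist ρ u) := by
  rw [twist_apply, mul_smul_comm, smul_mul_assoc, ← smul_neg]
  congr 1
  rw [← mul_assoc (gen₁ ρ), gen₁_mul_inl, neg_mul, neg_neg]

theorem inl_eq_smul_twist_mul (u : U) :
    ρ (ι _ (u, 0)) = -Complex.I • (twist ρ u * gen₁ ρ) := by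
  rw [twist_apply, smul_mul_assoc, mul_assoc, gen₁_mul_self, mul_one, smul_smul]
  simp

theorem apply_ι_mem_of_forall_mem {N : Submodule ℂ M} (h₀ : ∀ m ∈ N, gen₀ ρ m ∈ N)
    (h₁ : ∀ m ∈ N, gen₁ ρ m ∈ N) (hθ : ∀ u, ∀ m ∈ N, twist ρ u m ∈ N) (v : U × (Fin 2 → ℂ)) :
    ∀ m ∈ N, ρ (ι _ v) m ∈ N := by
  have hv : v = (v.1, 0) + v.2 0 • (0, Pi.single 0 1) + v.2 1 • (0, Pi.single 1 1) := by
    ext i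
    · simp
    · fin_cases i <;> simp
  intro m hm
  rw [hv, map_add, map_add, map_smul, map_smul, map_add, map_add, map_smul, map_smul,
    inl_eq_smul_twist_mul]
  simp only [LinearMap.add_apply, LinearMap.smul_apply, Module.End.mul_apply]
  exact N.add_mem (N.add_mem (N.smul_mem _ (hθ _ _ (h₁ m hm))) (N.smul_mem _ (h₀ m hm)))
    (N.smul_mem _ (h₁ m hm))

theorem twist_apply_mem_eigenspace_one (u : U) {m : M} (hm : m ∈ (gen₀ ρ).eigenspace 1) :
    twist ρ u m ∈ (gen₀ ρ).eigenspace 1 := by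
  rw [End.mem_eigenspace_iff, one_smul] at hm ⊢
  rw [← End.mul_apply, gen₀_mul_twist, End.mul_apply, hm]

theorem IsIrreducible.exists_isIrreducible_of_prod [FiniteDimensional ℂ M]
    (hρ : IsIrreducible ρ) :
    ∃ (P : Submodule ℂ M) (ρ' : CliffordAlgebra Q →ₐ[ℂ] Module.End ℂ P),
      IsIrreducible ρ' ∧ finrank ℂ M = 2 * finrank ℂ P := by
  have hdim := End.finrank_eq_two_mul_finrank_eigenspace_one (gen₀_mul_self ρ) (gen₁_mul_self ρ)
    (gen₀_mul_gen₁ ρ)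
  set P := (gen₀ ρ).eigenspace 1
  refine ⟨P, liftRestrict (twist ρ) (twist_mul_self ρ) P
    (fun u _ => twist_apply_mem_eigenspace_one ρ u), ⟨?_, fun N hN => ?_⟩, hdim⟩
  · have := hρ.1
    rw [← finrank_pos_iff (R := ℂ)] at this ⊢
    omega
  · have hsub := End.eq_bot_or_eq_eigenspace_one (gen₀_mul_gen₁ ρ) (gen₁_mul_self ρ)
      (twist_mul_gen₁ ρ) (fun N h₀ h₁ hθ => hρ.2 N (apply_ι_mem_of_forall_mem ρ h₀ h₁ hθ))
      (Submodule.map_subtype_le P N) (θ := twist ρ) (N := N.map P.subtype) (by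
        rintro u _ ⟨m, hm, rfl⟩
        exact ⟨_, hN u m hm, liftRestrict_ι_apply ..⟩)
    refine hsub.imp (fun h => ?_) (fun h => ?_) <;>
      refine Submodule.map_injective_of_injective P.injective_subtype (h.trans ?_)
    exacts [(Submodule.map_bot _).symm, (Submodule.map_subtype_top P).symm]

end Step

theorem IsIrreducible.finrank_eq_one {K V M : Type*} [Field K] [AddCommGroup V] [Module K V]
    {Q : QuadraticForm K V} [AddCommGroup M] [Module K M]
    {ρ : CliffordAlgebra Q →ₐ[K] Module.End K M} (hρ : IsIrreducible ρ) {m : M} (hm : m ≠ 0)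
    (h : ∀ v, ρ (ι Q v) m ∈ K ∙ m) : finrank K M = 1 := by
  have hspan : K ∙ m = ⊤ := by
    refine (hρ.2 (K ∙ m) fun v x hx => ?_).resolve_left (by simpa using hm)
    obtain ⟨c, rfl⟩ := Submodule.mem_span_singleton.mp hx
    rw [map_smul]
    exact Submodule.smul_mem _ _ (h v)
  rw [← finrank_top K M, ← hspan, finrank_span_singleton hm]

theorem finrank_eq_of_isIrreducible_sumSquares (n : ℕ) {M : Type*} [AddCommGroup M] [Module ℂ M]
    [FiniteDimensional ℂ M] {ρ : CliffordAlgebra (sumSquares n) →ₐ[ℂ] Module.End ℂ M}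
    (hρ : IsIrreducible ρ) : finrank ℂ M = 2 ^ (n / 2) := by
  induction n using Nat.twoStepInduction generalizing M with
  | zero =>
    have := hρ.1
    obtain ⟨m, hm⟩ := exists_ne (0 : M)
    refine hρ.finrank_eq_one hm fun v => ?_
    rw [Subsingleton.elim v 0, map_zero, map_zero]
    exact Submodule.zero_mem _
  | one =>
    have := hρ.1
    obtain ⟨μ, hμ⟩ := (ρ (ι _ 1)).exists_eigenvalue
    obtain ⟨m, hm⟩ := hμ.exists_hasEigenvector
    refine hρ.finrank_eq_one hm.2 fun v => ?_
    have hv : v = v 0 • 1 := by ext i; simp [Subsingleton.elim i 0]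
    rw [hv, map_smul, map_smul, LinearMap.smul_apply, hm.apply_eq_smul]
    exact Submodule.smul_mem _ _ (Submodule.smul_mem _ _ (Submodule.mem_span_singleton_self m))
  | more n ih _ =>
    let e := (sumSquaresAddEquivProd n 2).symm
    obtain ⟨P, ρ', hρ', hdim⟩ :=
      ((isIrreducible_comp_map_iff ρ e.toIsometry e.surjective).mpr
        hρ).exists_isIrreducible_of_prod
    rw [hdim, ih hρ', show (n + 2) / 2 = n / 2 + 1 by omega, pow_succ, mul_comm]

end CliffordAlgebra

open CliffordAlgebra

/-- Every finite-dimensional simple module over the Clifford algebra of a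
quadratic form `Q` of rank `n` on a finite-dimensional complex vector space
has complex dimension `2^⌊n/2⌋`.  The rank of `Q` is `dim V` minus the
dimension of the radical of the polar bilinear form of `Q`. -/
theorem stmt6 {V : Type*} [AddCommGroup V] [Module ℂ V] [FiniteDimensional ℂ V]
    (Q : QuadraticForm ℂ V) (n : ℕ)
    (hn : n = Module.finrank ℂ V -
      Module.finrank ℂ (LinearMap.ker (QuadraticMap.polarBilin Q)))
    (M : Type*) [AddCommGroup M] [Module ℂ M] [Module (CliffordAlgebra Q) M]
    [IsScalarTower ℂ (CliffordAlgebra Q) M] [FiniteDimensional ℂ M]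
    (hM : IsSimpleModule (CliffordAlgebra Q) M) :
    Module.finrank ℂ M = 2 ^ (n / 2) := by
  have hdim : finrank ℂ (V ⧸ Q.radical) = n := by
    rw [hn, ← radical_eq_ker_polarBilin, ← Submodule.finrank_quotient_add_finrank Q.radical,
      Nat.add_sub_cancel]
  obtain ⟨e⟩ := Q.radicalQuotient.equivalent_weightedSumSquares_of_isAlgClosed
    Q.separatingLeft_associated_radicalQuotient
  rw [← hdim]
  exact finrank_eq_of_isIrreducible_sumSquares _
    ((isIrreducible_comp_map_iff _ e.symm.toIsometry e.symm.surjective).mpr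
      (isIrreducible_radicalQuotientRep Q M))
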